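/- Let 1 ≤ p < ∞, x₀ ∈ ℝ, R > 0 and 0 < T ≤ R. Let Ω_R(x₀) = {(t,x) ∈ ℝ² : 0 ≤ t ≤ R, |x − x₀| ≤ R − t} and I_R(x₀) = {x ∈ ℝ : |x − x₀| ≤ R}. Let u₊₀, u₋₀ ∈ L^p(ℝ; ℂ) and let F₊, F₋ : (0,T) × ℝ → ℂ be measurable, and define u₊(t,x) = u₊₀(x−t) + ∫₀ᵗ F₊(s, x−(t−s)) ds and u₋(t,x) = u₋₀(x+t) + ∫₀ᵗ F₋(s, x+(t−s)) ds. Then, writing χ_Ω and χ_I for the indicator functions of Ω_R(x₀) and I_R(x₀), (∫₀ᵀ ∫_ℝ |χ_Ω(t,x) u₊(t,x) u₋(t,x)|^p dx dt)^{1/p} ≤ (1/2)^{1/p} (‖χ_I u₊₀‖_{L^p(ℝ)} + ∫₀ᵀ ‖χ_Ω(s,·) F₊(s,·)‖_{L^p(ℝ)} ds)(‖χ_I u₋₀‖_{L^p(ℝ)} + ∫₀ᵀ ‖χ_Ω(s,·) F₋(s,·)‖_{L^p(ℝ)} ds), whenever the right-hand side is finite. -/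

import Mathlib

/-!
For `(t, x)` in the backward light triangle, the backward characteristic `s ↦ x - c (t - s)`
(`c = ±1`) stays in the triangle and hits `t = 0` inside `I_R(x₀)`, so
`|u₊(t,x)| ≤ G₊(x - t)` and `|u₋(t,x)| ≤ G₋(x + t)`, where `G±(y)` is the localized datum at `y`
plus the integral of the localized forcing along the characteristic issuing from `y`.
Minkowski's integral inequality bounds `‖G±‖_p` by the corresponding factor of the right-hand
side, and the change of variables `(t, x) ↦ (x - t, x + t)`, of Jacobian `2`, gives
`∫∫ G₊(x - t)^p G₋(x + t)^p dx dt ≤ ½ ‖G₊‖_p^p ‖G₋‖_p^p`.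
-/

open MeasureTheory Set
open scoped ENNReal

namespace ENNReal

theorem le_rpow_of_le_mul_rpow {C M : ℝ≥0∞} {p q : ℝ} (hpq : p.HolderConjugate q) (hC : C ≠ ∞)
    (h : C ≤ M * C ^ (1 / q)) : C ≤ M ^ p := by
  rcases eq_or_ne C 0 with rfl | hC0
  · exact zero_le
  have hCq0 : C ^ (1 / q) ≠ 0 := (rpow_pos (pos_iff_ne_zero.2 hC0) hC).ne'
  have hCqt : C ^ (1 / q) ≠ ∞ := rpow_ne_top_of_nonneg (by simp [hpq.symm.nonneg]) hC
  have hsplit : C = C ^ (1 / p) * C ^ (1 / q) := by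
    rw [← rpow_add _ _ hC0 hC, one_div, one_div, hpq.inv_add_inv_eq_one, rpow_one]
  have hroot : C ^ (1 / p) ≤ M := (ENNReal.mul_le_mul_iff_left hCq0 hCqt).1 (hsplit ▸ h)
  calc C = (C ^ (1 / p)) ^ p := by rw [← rpow_mul, one_div_mul_cancel hpq.ne_zero, rpow_one]
    _ ≤ M ^ p := rpow_le_rpow hroot hpq.nonneg

end ENNReal

theorem lintegral_le_of_forall_lintegral_ne_top_le {α : Type*} [MeasurableSpace α]
    {μ : Measure α} [SigmaFinite μ] {f : α → ℝ≥0∞} (hf : Measurable f) {M : ℝ≥0∞}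
    (h : ∀ g : α → ℝ≥0∞, Measurable g → g ≤ f → ∫⁻ x, g x ∂μ ≠ ∞ → ∫⁻ x, g x ∂μ ≤ M) :
    ∫⁻ x, f x ∂μ ≤ M := by
  rw [← setLIntegral_univ, ← iUnion_spanningSets μ,
    setLIntegral_iUnion_of_directed _ (monotone_spanningSets μ).directed_le]
  refine iSup_le fun n => ?_
  have htrunc : ∫⁻ x in spanningSets μ n, f x ∂μ
      = ⨆ k : ℕ, ∫⁻ x in spanningSets μ n, min (f x) k ∂μ := by
    rw [← lintegral_iSup (fun k => hf.min measurable_const)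
      (fun j k hjk x => min_le_min_left _ (Nat.cast_le.2 hjk))]
    simp_rw [← inf_iSup_eq, ENNReal.iSup_natCast, inf_top_eq]
  rw [htrunc]
  refine iSup_le fun k => ?_
  rw [← lintegral_indicator (measurableSet_spanningSets μ n)]
  refine h _ ((hf.min measurable_const).indicator (measurableSet_spanningSets μ n))
    (fun x => (indicator_le_self _ _ x).trans (min_le_left _ _)) ?_
  rw [lintegral_indicator (measurableSet_spanningSets μ n)]
  refine ne_top_of_le_ne_top ?_ (setLIntegral_mono measurable_const fun x _ => min_le_right _ _)
  rw [setLIntegral_const]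
  exact ENNReal.mul_ne_top (ENNReal.natCast_ne_top k) (measure_spanningSets_lt_top μ n).ne

section Minkowski

variable {α β : Type*} [MeasurableSpace α] [MeasurableSpace β] {μ : Measure α} {ν : Measure β}
  {F : β → α → ℝ≥0∞}

theorem lintegral_rpow_le_of_le_lintegral [SFinite μ] [SFinite ν] {p q : ℝ}
    (hpq : p.HolderConjugate q) (hF : Measurable (Function.uncurry F)) {G : α → ℝ≥0∞}
    (hG : Measurable G) (hGF : ∀ x, G x ≤ ∫⁻ s, F s x ∂ν) :
    ∫⁻ x, G x ^ p ∂μ ≤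
      (∫⁻ s, (∫⁻ x, F s x ^ p ∂μ) ^ (1 / p) ∂ν) * (∫⁻ x, G x ^ p ∂μ) ^ (1 / q) := by
  have hGp : Measurable fun x => G x ^ (p - 1) := hG.pow_const _
  have hFswap : Measurable (Function.uncurry fun x s => F s x) := hF.comp measurable_swap
  calc ∫⁻ x, G x ^ p ∂μ = ∫⁻ x, G x ^ (p - 1) * G x ∂μ := by
        refine lintegral_congr fun x => ?_
        simpa using ENNReal.rpow_add_of_nonneg (x := G x) _ _ hpq.sub_one_pos.le zero_le_one
    _ ≤ ∫⁻ x, ∫⁻ s, G x ^ (p - 1) * F s x ∂ν ∂μ := by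
        refine lintegral_mono fun x => ?_
        rw [lintegral_const_mul _ hF.of_uncurry_right]
        exact mul_le_mul_right (hGF x) _
    _ = ∫⁻ s, ∫⁻ x, F s x * G x ^ (p - 1) ∂μ ∂ν := by
        rw [lintegral_lintegral_swap ((hGp.comp measurable_fst).mul hFswap).aemeasurable]
        simp_rw [mul_comm]
    _ ≤ ∫⁻ s, (∫⁻ x, F s x ^ p ∂μ) ^ (1 / p) * (∫⁻ x, G x ^ p ∂μ) ^ (1 / q) ∂ν := by
        refine lintegral_mono fun s => ?_
        have hHolder := ENNReal.lintegral_mul_le_Lp_mul_Lq μ hpq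
          (hF.of_uncurry_left (x := s)).aemeasurable hGp.aemeasurable
        simp_rw [← ENNReal.rpow_mul, hpq.sub_one_mul_conj] at hHolder
        exact hHolder
    _ = (∫⁻ s, (∫⁻ x, F s x ^ p ∂μ) ^ (1 / p) ∂ν) * (∫⁻ x, G x ^ p ∂μ) ^ (1 / q) :=
        lintegral_mul_const _ ((hF.pow_const p).lintegral_prod_right.pow_const _)

theorem eLpNorm_lintegral_le [SigmaFinite μ] [SFinite ν] {p : ℝ≥0∞} (hp : 1 ≤ p) (hp' : p ≠ ∞)
    (hF : Measurable (Function.uncurry F)) :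
    eLpNorm (fun x => ∫⁻ s, F s x ∂ν) p μ ≤ ∫⁻ s, eLpNorm (F s) p μ ∂ν := by
  have hp0 : p ≠ 0 := (zero_lt_one.trans_le hp).ne'
  have hFswap : Measurable (Function.uncurry fun x s => F s x) := hF.comp measurable_swap
  simp only [eLpNorm_eq_lintegral_rpow_enorm_toReal hp0 hp', enorm_eq_self]
  have hpr : 1 ≤ p.toReal := by simpa using ENNReal.toReal_mono hp' hp
  rcases hpr.eq_or_lt with hp1 | hp1
  · simp only [← hp1, ENNReal.rpow_one, div_one]
    exact (lintegral_lintegral_swap hFswap.aemeasurable).le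
  set M := ∫⁻ s, (∫⁻ x, F s x ^ p.toReal ∂μ) ^ (1 / p.toReal) ∂ν
  have hpq := Real.HolderConjugate.conjExponent hp1
  suffices h : ∫⁻ x, (∫⁻ s, F s x ∂ν) ^ p.toReal ∂μ ≤ M ^ p.toReal by
    simpa [← ENNReal.rpow_mul, hpq.ne_zero] using
      ENNReal.rpow_le_rpow h (one_div_nonneg.2 hpq.nonneg)
  -- Against a minorant `g` of finite integral, Hölder's step can be divided by `(∫ g)^(1/q)`.
  refine lintegral_le_of_forall_lintegral_ne_top_le
    (hFswap.lintegral_prod_right.pow_const _) fun g hg hgΦ hgfin => ?_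
  have hroot : ∀ x, (g x ^ (1 / p.toReal)) ^ p.toReal = g x := fun x => by
    rw [← ENNReal.rpow_mul, one_div_mul_cancel hpq.ne_zero, ENNReal.rpow_one]
  have hGΦ : ∀ x, g x ^ (1 / p.toReal) ≤ ∫⁻ s, F s x ∂ν := fun x => by
    simpa [← ENNReal.rpow_mul, hpq.ne_zero] using
      ENNReal.rpow_le_rpow (hgΦ x) (one_div_nonneg.2 hpq.nonneg)
  have key := lintegral_rpow_le_of_le_lintegral (μ := μ) hpq hF (hg.pow_const _) hGΦ
  simp only [hroot] at key
  exact ENNReal.le_rpow_of_le_mul_rpow hpq hgfin key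

end Minkowski

theorem AEMeasurable.exists_measurable_ge_ae_eq {α : Type*} [MeasurableSpace α] {μ : Measure α}
    {f : α → ℝ≥0∞} (hf : AEMeasurable f μ) : ∃ g, Measurable g ∧ f ≤ g ∧ g =ᵐ[μ] f := by
  classical
  obtain ⟨N, hbad, hN, hN0⟩ := exists_measurable_superset_of_null (ae_iff.1 hf.ae_eq_mk)
  refine ⟨N.piecewise (fun _ => ∞) (hf.mk f), measurable_const.piecewise hN hf.measurable_mk,
    fun x => ?_, ?_⟩
  · by_cases hx : x ∈ N
    · simp [hx]
    · have hfx : f x = hf.mk f x := not_not.1 fun h => hx (hbad h)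
      simp [hx, hfx]
  · filter_upwards [measure_eq_zero_iff_ae_notMem.1 hN0, hf.ae_eq_mk] with x hxN hfx
    simp [hxN, hfx]

theorem lintegral_comp_mul_left {g : ℝ → ℝ≥0∞} (hg : Measurable g) {a : ℝ} (ha : a ≠ 0) :
    ∫⁻ t, g (a * t) = ENNReal.ofReal |a⁻¹| * ∫⁻ z, g z := by
  rw [← lintegral_map hg (measurable_const_mul a), Real.map_volume_mul_left ha,
    lintegral_smul_measure, smul_eq_mul]

theorem lintegral_comp_sub_mul_comp_add_le {f g : ℝ → ℝ≥0∞} (hf : Measurable f)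
    (hg : Measurable g) (s : Set ℝ) :
    ∫⁻ q, f (q.2 - q.1) * g (q.2 + q.1) ∂(volume.restrict s).prod volume ≤
      2⁻¹ * (∫⁻ y, f y) * ∫⁻ y, g y := by
  have hscale : ∀ y, ∫⁻ t, g (y + 2 * t) = 2⁻¹ * ∫⁻ z, g z := fun y => by
    rw [lintegral_comp_mul_left (g := fun z => g (y + z)) (by fun_prop) two_ne_zero,
      lintegral_add_left_eq_self g y, abs_of_pos (by norm_num), ENNReal.ofReal_inv_of_pos two_pos,
      ENNReal.ofReal_ofNat]
  calc ∫⁻ q, f (q.2 - q.1) * g (q.2 + q.1) ∂(volume.restrict s).prod volume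
      = ∫⁻ t in s, ∫⁻ x, f (x - t) * g (x + t) := lintegral_prod _ (by fun_prop)
    _ = ∫⁻ t in s, ∫⁻ y, f y * g (y + 2 * t) := by
        refine lintegral_congr fun t => ?_
        rw [← lintegral_add_right_eq_self _ t]
        simp only [add_sub_cancel_right, add_assoc, ← two_mul]
    _ ≤ ∫⁻ t, ∫⁻ y, f y * g (y + 2 * t) := setLIntegral_le_lintegral _ _
    _ = ∫⁻ y, f y * ∫⁻ t, g (y + 2 * t) := by
        rw [lintegral_lintegral_swap (by fun_prop)]
        exact lintegral_congr fun y => lintegral_const_mul _ (by fun_prop)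
    _ = 2⁻¹ * (∫⁻ y, f y) * ∫⁻ y, g y := by
        simp_rw [hscale, lintegral_mul_const _ hf]
        ring

theorem eLpNorm_comp_sub_mul_comp_add_le {p : ℝ≥0∞} (hp0 : p ≠ 0) (hp : p ≠ ∞)
    {f g : ℝ → ℝ≥0∞} (hf : Measurable f) (hg : Measurable g) (s : Set ℝ) :
    eLpNorm (fun q : ℝ × ℝ => f (q.2 - q.1) * g (q.2 + q.1)) p ((volume.restrict s).prod volume)
      ≤ 2⁻¹ ^ (1 / p.toReal) * eLpNorm f p volume * eLpNorm g p volume := by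
  have hpr : 0 < p.toReal := ENNReal.toReal_pos hp0 hp
  simp only [eLpNorm_eq_lintegral_rpow_enorm_toReal hp0 hp, enorm_eq_self,
    ENNReal.mul_rpow_of_nonneg _ _ hpr.le]
  calc _ ≤ (2⁻¹ * (∫⁻ y, f y ^ p.toReal) * ∫⁻ y, g y ^ p.toReal) ^ (1 / p.toReal) :=
        ENNReal.rpow_le_rpow
          (lintegral_comp_sub_mul_comp_add_le (hf.pow_const _) (hg.pow_const _) s) (by positivity)
    _ = _ := by simp only [ENNReal.mul_rpow_of_nonneg _ _ (by positivity : 0 ≤ 1 / p.toReal)]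

def backwardLightTriangle (x₀ R : ℝ) : Set (ℝ × ℝ) :=
  {q | 0 ≤ q.1 ∧ q.1 ≤ R ∧ |q.2 - x₀| ≤ R - q.1}

theorem measurableSet_backwardLightTriangle (x₀ R : ℝ) :
    MeasurableSet (backwardLightTriangle x₀ R) :=
  IsClosed.measurableSet <| (isClosed_le continuous_const continuous_fst).inter <|
    (isClosed_le continuous_fst continuous_const).inter <|
      isClosed_le (continuous_snd.sub continuous_const).abs (continuous_const.sub continuous_fst)

theorem mem_backwardLightTriangle_of_characteristic {x₀ R c t x s : ℝ} (hc : |c| ≤ 1)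
    (hq : (t, x) ∈ backwardLightTriangle x₀ R) (hs : 0 ≤ s) (hst : s ≤ t) :
    (s, x - c * (t - s)) ∈ backwardLightTriangle x₀ R := by
  obtain ⟨-, htR, hx⟩ := hq
  have hshift : |c * (t - s)| ≤ t - s := by
    rw [abs_mul, abs_of_nonneg (sub_nonneg.2 hst)]
    exact mul_le_of_le_one_left (sub_nonneg.2 hst) hc
  refine ⟨hs, hst.trans htR, ?_⟩
  calc |x - c * (t - s) - x₀| = |(x - x₀) - c * (t - s)| := by ring_nf
    _ ≤ |x - x₀| + |c * (t - s)| := abs_sub _ _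
    _ ≤ R - s := by linarith

noncomputable def characteristicMajorant (c T : ℝ) (a : ℝ → ℝ≥0∞) (K : ℝ × ℝ → ℝ≥0∞)
    (y : ℝ) : ℝ≥0∞ :=
  a y + ∫⁻ s in Ioo 0 T, K (s, y + c * s)

section characteristicMajorant

variable {c T : ℝ} {a : ℝ → ℝ≥0∞} {K : ℝ × ℝ → ℝ≥0∞}

theorem measurable_characteristicMajorant (ha : Measurable a) (hK : Measurable K) :
    Measurable (characteristicMajorant c T a K) :=
  ha.add (Measurable.lintegral_prod_left (f := fun s y => K (s, y + c * s)) (by fun_prop))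

theorem eLpNorm_characteristicMajorant_le {p : ℝ≥0∞} (hp : 1 ≤ p) (hp' : p ≠ ∞)
    (ha : Measurable a) (hK : Measurable K) :
    eLpNorm (characteristicMajorant c T a K) p volume ≤
      eLpNorm a p volume + ∫⁻ s in Ioo 0 T, eLpNorm (fun y => K (s, y)) p volume := by
  have hKc : Measurable (Function.uncurry fun s y => K (s, y + c * s)) := by fun_prop
  refine (eLpNorm_add_le ha.aestronglyMeasurable
    hKc.lintegral_prod_left.aestronglyMeasurable hp).trans (add_le_add le_rfl ?_)
  refine (eLpNorm_lintegral_le hp hp' hKc).trans (le_of_eq (lintegral_congr fun s => ?_))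
  exact eLpNorm_comp_measurePreserving (g := fun y => K (s, y))
    (by fun_prop : Measurable fun y => K (s, y)).aestronglyMeasurable
    (measurePreserving_add_right volume (c * s))

theorem enorm_duhamel_le {x₀ R : ℝ} (hc : |c| ≤ 1) {u0 : ℝ → ℂ} {F : ℝ → ℝ → ℂ}
    (ha : ∀ y, |y - x₀| ≤ R → ‖u0 y‖ₑ ≤ a y) {t x : ℝ}
    (hq : (t, x) ∈ backwardLightTriangle x₀ R) (htT : t < T) :
    ‖u0 (x - c * t) + ∫ s in (0 : ℝ)..t, F s (x - c * (t - s))‖ₑ ≤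
      characteristicMajorant c T a
        (fun q => ‖(backwardLightTriangle x₀ R).indicator (fun q => F q.1 q.2) q‖ₑ)
        (x - c * t) := by
  have ht : 0 ≤ t := hq.1
  have hdata : ‖u0 (x - c * t)‖ₑ ≤ a (x - c * t) := by
    refine ha _ ?_
    simpa using (mem_backwardLightTriangle_of_characteristic hc hq le_rfl ht).2.2
  have hforcing : ‖∫ s in (0 : ℝ)..t, F s (x - c * (t - s))‖ₑ ≤
      ∫⁻ s in Ioo 0 T, ‖(backwardLightTriangle x₀ R).indicator (fun q => F q.1 q.2)
        (s, x - c * t + c * s)‖ₑ := by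
    rw [intervalIntegral.integral_of_le ht]
    refine (enorm_integral_le_lintegral_enorm _).trans ?_
    rw [setLIntegral_congr_fun measurableSet_Ioc fun s hs => ?_]
    · exact lintegral_mono_set fun s hs => ⟨hs.1, hs.2.trans_lt htT⟩
    · rw [show x - c * t + c * s = x - c * (t - s) by ring,
        indicator_of_mem (mem_backwardLightTriangle_of_characteristic hc hq hs.1.le hs.2)]
  exact (enorm_add_le _ _).trans (add_le_add hdata hforcing)

end characteristicMajorant

theorem exists_measurable_majorant_duhamel {x₀ R T c : ℝ} (hc : |c| ≤ 1) {p : ℝ≥0∞} (hp : 1 ≤ p)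
    (hp' : p ≠ ∞) {u0 : ℝ → ℂ} (hu0 : AEStronglyMeasurable u0 volume) {F : ℝ → ℝ → ℂ}
    (hF : Measurable (Function.uncurry F)) :
    ∃ G : ℝ → ℝ≥0∞, Measurable G ∧
      (∀ {t x : ℝ}, (t, x) ∈ backwardLightTriangle x₀ R → t < T →
        ‖u0 (x - c * t) + ∫ s in (0 : ℝ)..t, F s (x - c * (t - s))‖ₑ ≤ G (x - c * t)) ∧
      eLpNorm G p volume ≤ eLpNorm ({y | |y - x₀| ≤ R}.indicator u0) p volume +
        ∫⁻ s in Ioo 0 T, eLpNorm (fun x => (backwardLightTriangle x₀ R).indicator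
          (fun q : ℝ × ℝ => F q.1 q.2) (s, x)) p volume := by
  have hI : MeasurableSet {y : ℝ | |y - x₀| ≤ R} := measurableSet_le (by fun_prop) measurable_const
  obtain ⟨a, ha, hle, hae⟩ := (hu0.indicator hI).enorm.exists_measurable_ge_ae_eq
  set K : ℝ × ℝ → ℝ≥0∞ :=
    fun q => ‖(backwardLightTriangle x₀ R).indicator (fun q : ℝ × ℝ => F q.1 q.2) q‖ₑ
  have hK : Measurable K := (hF.indicator (measurableSet_backwardLightTriangle x₀ R)).enorm
  refine ⟨characteristicMajorant c T a K, measurable_characteristicMajorant ha hK,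
    fun hq htT => enorm_duhamel_le hc (fun y hy => ?_) hq htT, ?_⟩
  · simpa [indicator_of_mem (show y ∈ {y | |y - x₀| ≤ R} from hy)] using hle y
  · calc eLpNorm (characteristicMajorant c T a K) p volume
        ≤ eLpNorm a p volume + ∫⁻ s in Ioo 0 T, eLpNorm (fun y => K (s, y)) p volume :=
          eLpNorm_characteristicMajorant_le hp hp' ha hK
      _ = _ := by simp only [eLpNorm_congr_ae hae, K, eLpNorm_enorm]

theorem bilinear_estimate_localized_general
    (p : ℝ≥0∞) (hp : 1 ≤ p) (hp' : p ≠ ⊤)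
    (x₀ R : ℝ)
    (T : ℝ)
    (Ω : Set (ℝ × ℝ)) (hΩ : Ω = {q : ℝ × ℝ | 0 ≤ q.1 ∧ q.1 ≤ R ∧ |q.2 - x₀| ≤ R - q.1})
    (I : Set ℝ) (hI : I = {x : ℝ | |x - x₀| ≤ R})
    (up0 um0 : ℝ → ℂ)
    (hup0 : MemLp up0 p volume) (hum0 : MemLp um0 p volume)
    (Fp Fm : ℝ → ℝ → ℂ)
    (hFpmeas : Measurable (Function.uncurry Fp))
    (hFmmeas : Measurable (Function.uncurry Fm))
    (up um : ℝ → ℝ → ℂ)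
    (hup : ∀ t x : ℝ, up t x = up0 (x - t) + (∫ s in (0:ℝ)..t, Fp s (x - (t - s))))
    (hum : ∀ t x : ℝ, um t x = um0 (x + t) + (∫ s in (0:ℝ)..t, Fm s (x + (t - s))))
    (RHS : ℝ≥0∞)
    (hRHS : RHS = (1/2 : ℝ≥0∞) ^ (1/p.toReal) *
        (eLpNorm (I.indicator up0) p volume +
          (∫⁻ s in Ioo (0:ℝ) T,
            eLpNorm (fun x => Ω.indicator (fun q : ℝ × ℝ => Fp q.1 q.2) (s, x)) p volume)) *
        (eLpNorm (I.indicator um0) p volume +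
          (∫⁻ s in Ioo (0:ℝ) T,
            eLpNorm (fun x => Ω.indicator (fun q : ℝ × ℝ => Fm q.1 q.2) (s, x)) p volume))) :
    eLpNorm (Ω.indicator (fun q : ℝ × ℝ => up q.1 q.2 * um q.1 q.2)) p
        ((volume.restrict (Ioo (0:ℝ) T)).prod volume) ≤ RHS := by
  replace hΩ : Ω = backwardLightTriangle x₀ R := hΩ
  subst hΩ hI hRHS
  obtain ⟨Gp, hGp, hup_le, hGp_le⟩ := exists_measurable_majorant_duhamel (T := T) (c := 1) (by norm_num)
    hp hp' hup0.aestronglyMeasurable hFpmeas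
  obtain ⟨Gm, hGm, hum_le, hGm_le⟩ := exists_measurable_majorant_duhamel (T := T) (c := -1) (by norm_num)
    hp hp' hum0.aestronglyMeasurable hFmmeas
  have hbound : ∀ᵐ q ∂(volume.restrict (Ioo 0 T)).prod volume,
      ‖(backwardLightTriangle x₀ R).indicator (fun q : ℝ × ℝ => up q.1 q.2 * um q.1 q.2) q‖ₑ ≤
        ‖Gp (q.2 - q.1) * Gm (q.2 + q.1)‖ₑ := by
    filter_upwards [Measure.quasiMeasurePreserving_fst.ae (ae_restrict_mem measurableSet_Ioo)]
      with ⟨t, x⟩ ht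
    by_cases hq : (t, x) ∈ backwardLightTriangle x₀ R
    · rw [indicator_of_mem hq, enorm_mul, enorm_eq_self]
      gcongr
      · simpa only [hup, one_mul] using hup_le hq ht.2
      · simpa only [hum, neg_mul, one_mul, sub_neg_eq_add] using hum_le hq ht.2
    · simp [indicator_of_notMem hq]
  calc _ ≤ eLpNorm (fun q : ℝ × ℝ => Gp (q.2 - q.1) * Gm (q.2 + q.1)) p _ :=
        eLpNorm_mono_enorm_ae hbound
    _ ≤ 2⁻¹ ^ (1 / p.toReal) * eLpNorm Gp p volume * eLpNorm Gm p volume :=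
        eLpNorm_comp_sub_mul_comp_add_le (zero_lt_one.trans_le hp).ne' hp' hGp hGm _
    _ ≤ _ := by
        rw [one_div (2 : ℝ≥0∞)]
        gcongr

/-- Bilinear transport estimate localized to the backward light triangle
`Ω_R(x₀) = {(t,x) : 0 ≤ t ≤ R, |x−x₀| ≤ R−t}`: for the Duhamel solutions `u₊`
of `∂ₜu₊ + ∂ₓu₊ = F₊`, `u₊(0) = u₊₀`, and `u₋` of `∂ₜu₋ − ∂ₓu₋ = F₋`,
`u₋(0) = u₋₀`, the `L^p((0,T)×ℝ)` norm of `χ_Ω u₊u₋` is controlled in terms of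
the data restricted to `I_R(x₀) = {x : |x−x₀| ≤ R}` and the forcings restricted
to `Ω_R(x₀)`, whenever the right-hand side is finite. -/
theorem bilinear_estimate_localized
    (p : ℝ≥0∞) (hp : 1 ≤ p) (hp' : p ≠ ⊤)
    (x₀ R : ℝ) (hR : 0 < R)
    (T : ℝ) (hT : 0 < T) (hTR : T ≤ R)
    (Ω : Set (ℝ × ℝ)) (hΩ : Ω = {q : ℝ × ℝ | 0 ≤ q.1 ∧ q.1 ≤ R ∧ |q.2 - x₀| ≤ R - q.1})
    (I : Set ℝ) (hI : I = {x : ℝ | |x - x₀| ≤ R})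
    (up0 um0 : ℝ → ℂ)
    (hup0 : MemLp up0 p volume) (hum0 : MemLp um0 p volume)
    (Fp Fm : ℝ → ℝ → ℂ)
    (hFpmeas : Measurable (Function.uncurry Fp))
    (hFmmeas : Measurable (Function.uncurry Fm))
    (up um : ℝ → ℝ → ℂ)
    (hup : ∀ t x : ℝ, up t x = up0 (x - t) + (∫ s in (0:ℝ)..t, Fp s (x - (t - s))))
    (hum : ∀ t x : ℝ, um t x = um0 (x + t) + (∫ s in (0:ℝ)..t, Fm s (x + (t - s))))
    (RHS : ℝ≥0∞)
    (hRHS : RHS = (1/2 : ℝ≥0∞) ^ (1/p.toReal) *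
        (eLpNorm (I.indicator up0) p volume +
          (∫⁻ s in Ioo (0:ℝ) T,
            eLpNorm (fun x => Ω.indicator (fun q : ℝ × ℝ => Fp q.1 q.2) (s, x)) p volume)) *
        (eLpNorm (I.indicator um0) p volume +
          (∫⁻ s in Ioo (0:ℝ) T,
            eLpNorm (fun x => Ω.indicator (fun q : ℝ × ℝ => Fm q.1 q.2) (s, x)) p volume)))
    (hfin : RHS ≠ ⊤) :
    eLpNorm (Ω.indicator (fun q : ℝ × ℝ => up q.1 q.2 * um q.1 q.2)) p
        ((volume.restrict (Ioo (0:ℝ) T)).prod volume) ≤ RHS :=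
  bilinear_estimate_localized_general p hp hp' x₀ R T Ω hΩ I hI up0 um0 hup0 hum0 Fp Fm hFpmeas
    hFmmeas up um hup hum RHS hRHS
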